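/- (The malicious agent's measurement statistics carry no information about the message.) Let |Φ⟩₁ ∈ EuclideanSpace ℂ (Fin 4 → ZMod 2) be the state obtained by applying CNOT (control s₁, target s₂) and then Hadamard on s₁ to (α|0⟩ + β|1⟩) ⊗ W₃, where α, β ∈ ℂ satisfy |α|² + |β|² = 1 and the qubits are ordered (s₁, s₂, r, m). Then the Born-rule probability that a computational-basis measurement of the malicious qubit m yields 1 equals 1/3, and the probability that it yields 0 equals 2/3; in particular these probabilities are independent of α and β. -/

import Mathlib

/-!
Measuring qubit `m` only sees the marginal `∑ |ψ x|²` over `x m = y`. Neither gate touches `m`: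
CNOT permutes the basis vectors without changing the bit `x m`, and the Hadamard gate on `s₁`
acts unitarily on each pair of amplitudes that differ only in the bit `x 0`. So the marginal of
`|Φ⟩₁` at `m` is that of `(α|0⟩ + β|1⟩) ⊗ W₃`, which factors as `(|α|² + |β|²)` times the
marginal of `W₃` on its last qubit, namely `1/3` for outcome `1` and `2/3` for outcome `0`.
-/

/-- Amplitude of the 3-qubit W state at bitstring `(a, b, c)`. -/
noncomputable def w3amp (a b c : ZMod 2) : ℂ :=
  if (a = 1 ∧ b = 0 ∧ c = 0) ∨ (a = 0 ∧ b = 1 ∧ c = 0) ∨ (a = 0 ∧ b = 0 ∧ c = 1)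
  then ((1 / Real.sqrt 3 : ℝ) : ℂ) else 0

/-- The joint state `φ ⊗ W₃` with `φ = α|0⟩ + β|1⟩` on qubit `s₁ = 0` and the
3-qubit W state on qubits `(s₂, r, m) = (1, 2, 3)`. -/
noncomputable def jointState (α β : ℂ) : EuclideanSpace ℂ (Fin 4 → ZMod 2) :=
  WithLp.toLp 2 (fun x => (if x 0 = 0 then α else β) * w3amp (x 1) (x 2) (x 3))

/-- CNOT with control qubit `0` and target qubit `1` (a self-inverse basis permutation). -/
noncomputable def cnot01 (ψ : EuclideanSpace ℂ (Fin 4 → ZMod 2)) :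
    EuclideanSpace ℂ (Fin 4 → ZMod 2) :=
  WithLp.toLp 2 (fun x => ψ (Function.update x 1 (x 1 + x 0)))

/-- Hadamard gate on qubit `0`. -/
noncomputable def had0 (ψ : EuclideanSpace ℂ (Fin 4 → ZMod 2)) :
    EuclideanSpace ℂ (Fin 4 → ZMod 2) :=
  WithLp.toLp 2 (fun x => ((1 / Real.sqrt 2 : ℝ) : ℂ) *
    (ψ (Function.update x 0 0) + (if x 0 = 0 then 1 else -1) * ψ (Function.update x 0 1)))

/-- The state `|Φ⟩₁` obtained by applying CNOT (control `s₁`, target `s₂`) and then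
Hadamard on `s₁` to `(α|0⟩ + β|1⟩) ⊗ W₃`. -/
noncomputable def Phi1 (α β : ℂ) : EuclideanSpace ℂ (Fin 4 → ZMod 2) :=
  had0 (cnot01 (jointState α β))

/-- Computational-basis vector `|b₀b₁b₂b₃⟩`. -/
noncomputable def ket4 (b0 b1 b2 b3 : ZMod 2) : EuclideanSpace ℂ (Fin 4 → ZMod 2) :=
  EuclideanSpace.single ![b0, b1, b2, b3] 1

open Finset

noncomputable def measureProb {ι : Type*} [Fintype ι] [DecidableEq ι]
    (ψ : EuclideanSpace ℂ (ι → ZMod 2)) (m : ι) (y : ZMod 2) : ℝ :=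
  ∑ x ∈ univ.filter (fun x : ι → ZMod 2 => x m = y), ‖ψ x‖ ^ 2

theorem Fin.sum_univ_pi_succ {α : Type*} [Fintype α] {M : Type*} [AddCommMonoid M] {n : ℕ}
    (f : (Fin (n + 1) → α) → M) :
    ∑ x, f x = ∑ a, ∑ t : Fin n → α, f (Fin.cons a t) := by
  rw [← (Fin.consEquiv fun _ => α).sum_comp, Fintype.sum_prod_type]
  rfl

theorem ZMod.sum_univ_two {M : Type*} [AddCommMonoid M] (f : ZMod 2 → M) :
    ∑ a, f a = f 0 + f 1 :=
  Fin.sum_univ_two f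

theorem measureProb_comp_perm {ι : Type*} [Fintype ι] [DecidableEq ι]
    (ψ : EuclideanSpace ℂ (ι → ZMod 2)) (σ : Equiv.Perm (ι → ZMod 2)) {m : ι}
    (hσ : ∀ x, σ x m = x m) (y : ZMod 2) :
    measureProb (WithLp.toLp 2 fun x => ψ (σ x)) m y = measureProb ψ m y := by
  simp only [measureProb, sum_filter]
  rw [← Equiv.sum_comp σ (fun x => if x m = y then ‖ψ x‖ ^ 2 else 0)]
  simp only [hσ]

theorem measureProb_succ {n : ℕ} (ψ : EuclideanSpace ℂ (Fin (n + 1) → ZMod 2)) (m : Fin n)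
    (y : ZMod 2) :
    measureProb ψ m.succ y =
      ∑ t ∈ univ.filter (fun t : Fin n → ZMod 2 => t m = y), ∑ a, ‖ψ (Fin.cons a t)‖ ^ 2 := by
  simp only [measureProb, sum_filter, Fin.sum_univ_pi_succ, Fin.cons_succ]
  rw [sum_comm]
  simp only [sum_ite_irrel, sum_const_zero]

theorem cnot01_involutive :
    Function.Involutive fun x : Fin 4 → ZMod 2 => Function.update x 1 (x 1 + x 0) := by
  intro x
  simp [add_assoc, CharTwo.add_self_eq_zero]

theorem measureProb_cnot01 (ψ : EuclideanSpace ℂ (Fin 4 → ZMod 2)) {m : Fin 4} (hm : m ≠ 1)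
    (y : ZMod 2) : measureProb (cnot01 ψ) m y = measureProb ψ m y :=
  measureProb_comp_perm ψ cnot01_involutive.toPerm (fun _ => Function.update_of_ne hm _ _) y

-- The Hadamard gate is unitary on each pair of amplitudes: this is the parallelogram law.
theorem norm_sq_hadamard (u v : ℂ) :
    ‖((1 / Real.sqrt 2 : ℝ) : ℂ) * (u + 1 * v)‖ ^ 2 +
      ‖((1 / Real.sqrt 2 : ℝ) : ℂ) * (u + -1 * v)‖ ^ 2 = ‖u‖ ^ 2 + ‖v‖ ^ 2 := by
  have hc : ‖((1 / Real.sqrt 2 : ℝ) : ℂ)‖ ^ 2 = 1 / 2 := by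
    rw [Complex.norm_real, Real.norm_eq_abs, sq_abs, div_pow, Real.sq_sqrt zero_le_two, one_pow]
  rw [norm_mul, norm_mul, mul_pow, mul_pow, hc, one_mul, neg_one_mul, ← sub_eq_add_neg,
    ← mul_add, parallelogram_law_with_norm ℝ]
  ring

theorem measureProb_had0 (ψ : EuclideanSpace ℂ (Fin 4 → ZMod 2)) {m : Fin 4} (hm : m ≠ 0)
    (y : ZMod 2) : measureProb (had0 ψ) m y = measureProb ψ m y := by
  obtain ⟨k, rfl⟩ := Fin.exists_succ_eq.mpr hm
  rw [measureProb_succ, measureProb_succ]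
  refine sum_congr rfl fun t _ => ?_
  simp only [had0, ZMod.sum_univ_two, PiLp.toLp_apply, Fin.update_cons_zero, Fin.cons_zero]
  exact norm_sq_hadamard _ _

theorem measureProb_cons_mul {n : ℕ} (φ : ZMod 2 → ℂ) (χ : EuclideanSpace ℂ (Fin n → ZMod 2))
    (m : Fin n) (y : ZMod 2) :
    measureProb (WithLp.toLp 2 fun x => φ (x 0) * χ (Fin.tail x)) m.succ y
      = (∑ a, ‖φ a‖ ^ 2) * measureProb χ m y := by
  rw [measureProb_succ, measureProb, mul_sum]
  refine sum_congr rfl fun t _ => ?_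
  simp only [Fin.cons_zero, Fin.tail_cons, norm_mul, mul_pow, sum_mul]

noncomputable def w3 : EuclideanSpace ℂ (Fin 3 → ZMod 2) :=
  WithLp.toLp 2 fun t => w3amp (t 0) (t 1) (t 2)

theorem jointState_eq_toLp_cons_mul (α β : ℂ) :
    jointState α β = WithLp.toLp 2 fun x => (if x 0 = 0 then α else β) * w3 (Fin.tail x) :=
  rfl

-- Restated so that `simp` can evaluate the tuples at numerals through `Matrix.cons_val`.
theorem Fin.cons_eq_vecCons {α : Type*} {n : ℕ} (a : α) (t : Fin n → α) :
    Fin.cons a t = Matrix.vecCons a t :=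
  rfl

theorem measureProb_w3_one : measureProb w3 2 1 = 1 / 3 := by
  simp [measureProb, sum_filter, Fin.sum_univ_pi_succ, ZMod.sum_univ_two, w3, w3amp,
    Fin.cons_eq_vecCons]

theorem measureProb_w3_zero : measureProb w3 2 0 = 2 / 3 := by
  simp [measureProb, sum_filter, Fin.sum_univ_pi_succ, ZMod.sum_univ_two, w3, w3amp,
    Fin.cons_eq_vecCons]
  norm_num

theorem stmt10 (α β : ℂ) (h : ‖α‖ ^ 2 + ‖β‖ ^ 2 = 1) :
    (∑ x ∈ Finset.univ.filter (fun x : Fin 4 → ZMod 2 => x 3 = 1),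
        ‖Phi1 α β x‖ ^ 2 = 1 / 3) ∧
    (∑ x ∈ Finset.univ.filter (fun x : Fin 4 → ZMod 2 => x 3 = 0),
        ‖Phi1 α β x‖ ^ 2 = 2 / 3) := by
  have hm : ∀ y, measureProb (Phi1 α β) 3 y = measureProb w3 2 y := fun y => by
    rw [Phi1, measureProb_had0 _ (by decide), measureProb_cnot01 _ (by decide),
      jointState_eq_toLp_cons_mul, show (3 : Fin 4) = Fin.succ 2 from rfl,
      measureProb_cons_mul fun a => if a = 0 then α else β, ZMod.sum_univ_two, if_pos rfl,
      if_neg one_ne_zero, h, one_mul]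
  exact ⟨(hm 1).trans measureProb_w3_one, (hm 0).trans measureProb_w3_zero⟩
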